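/- The Jacobian determinant (2y + 2xy² + x)² + x²(2y² + 3)² of the map ψ(x,y) = ((xy² + x + y)(x - y), (xy + 1)² + x²) vanishes only at (x,y) = (0,0). -/

import Mathlib

/-! Both summands are squares, so both vanish. Since `2 * y ^ 2 + 3 > 0`, the second forces
`x = 0`, and then the first is `(2 * y) ^ 2`. -/

theorem psi_jacobian_vanishes_only_at_origin (x y : ℝ) :
    (2 * y + 2 * x * y ^ 2 + x) ^ 2 + x ^ 2 * (2 * y ^ 2 + 3) ^ 2 = 0 ↔
      x = 0 ∧ y = 0 := by
  constructor
  · intro h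
    obtain ⟨hfirst, hsecond⟩ := (add_eq_zero_iff_of_nonneg (sq_nonneg _) (by positivity)).1 h
    have hx : x = 0 := by
      have : (2 * y ^ 2 + 3) ^ 2 ≠ 0 := by positivity
      simpa [this] using hsecond
    subst hx
    exact ⟨rfl, by simpa using hfirst⟩
  · rintro ⟨rfl, rfl⟩
    norm_num
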